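/- arXiv:1210.8097 — 4 statements merged into one kernel-verified Lean document; each statement's English description precedes it below -/
import Mathlib

section
/- Let n ≥ 2, ρ = e^{2πi/n}, ν = ⌊n/2⌋. For w = e^{iφ} with π/n < φ < 2π/n and k ∈ {1,…,n}, one has Re(i·w·ρ^{k-1}) < 0 if and only if k ≤ ν. -/
/-!
Writing `I * w * ρ ^ (k - 1) = I * exp (θ * I)` with `θ = φ + 2π(k - 1)/n`, the real part is
`-sin θ`, and `θ` lies in the arc `((2k - 1)π/n, 2kπ/n)`. That arc is contained in `(0, π)` when
`2k ≤ n` and in `(π, 2π)` otherwise, which decides the sign of `sin θ`.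
-/

open Complex Real

theorem Real.sin_pos_iff_two_mul_succ_le {n m : ℕ} (hmn : m < n) {θ : ℝ}
    (hlo : (2 * m + 1) * π / n < θ) (hhi : θ < 2 * (m + 1) * π / n) :
    0 < Real.sin θ ↔ 2 * (m + 1) ≤ n := by
  have hn : (0 : ℝ) < n := by exact_mod_cast (Nat.zero_le m).trans_lt hmn
  rw [div_lt_iff₀ hn] at hlo
  rw [lt_div_iff₀ hn] at hhi
  constructor
  · intro hsin
    by_contra! hlt
    have hn_le : (n : ℝ) ≤ 2 * m + 1 := by exact_mod_cast Nat.le_of_lt_succ hlt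
    have hmn' : (m : ℝ) + 1 ≤ n := by exact_mod_cast hmn
    have hπθ : π < θ := lt_of_mul_lt_mul_right
      (calc π * n ≤ (2 * m + 1) * π := by nlinarith [pi_pos]
        _ < θ * n := hlo) hn.le
    have hθ2π : θ < 2 * π := lt_of_mul_lt_mul_right
      (calc θ * n < 2 * (m + 1) * π := hhi
        _ ≤ 2 * π * n := by nlinarith [pi_pos]) hn.le
    have hsub := sin_pos_of_pos_of_lt_pi (x := θ - π) (by linarith) (by linarith)
    rw [sin_sub_pi] at hsub
    linarith
  · intro hle
    have hle' : 2 * ((m : ℝ) + 1) ≤ n := by exact_mod_cast hle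
    refine sin_pos_of_pos_of_lt_pi (pos_of_mul_pos_left ?_ hn.le)
      (lt_of_mul_lt_mul_right ?_ hn.le)
    · nlinarith [pi_pos]
    · calc θ * n < 2 * (m + 1) * π := hhi
        _ ≤ π * n := by nlinarith [pi_pos]

theorem Complex.exp_I_mul_mul_exp_two_pi_I_div_pow (φ : ℝ) (n m : ℕ) :
    exp (I * φ) * exp (2 * π * I / n) ^ m = exp ((φ + 2 * π * m / n : ℝ) * I) := by
  rw [← exp_nat_mul, ← exp_add]
  push_cast
  ring_nf

theorem Complex.re_I_mul_exp_ofReal_mul_I (θ : ℝ) : (I * exp (θ * I)).re = -Real.sin θ := by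
  rw [I_mul_re, exp_ofReal_mul_I_im]

theorem halfplane_arc2_general (n : ℕ) (ν : ℕ) (hν : ν = n / 2)
    (ρ : ℂ) (hρ : ρ = Complex.exp (2 * Real.pi * Complex.I / n))
    (φ : ℝ) (hφ : Real.pi / n < φ) (hφ' : φ < 2 * Real.pi / n)
    (w : ℂ) (hw : w = Complex.exp (Complex.I * φ))
    (k : ℕ) (hk1 : 1 ≤ k) (hkn : k ≤ n) :
    (Complex.I * w * ρ ^ (k - 1)).re < 0 ↔ k ≤ ν := by
  have hmn : k - 1 < n := by omega
  rw [hw, hρ, mul_assoc, exp_I_mul_mul_exp_two_pi_I_div_pow, re_I_mul_exp_ofReal_mul_I,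
    neg_lt_zero, sin_pos_iff_two_mul_succ_le hmn, hν]
  · omega
  · calc (2 * (k - 1 : ℕ) + 1) * π / n = π / n + 2 * π * (k - 1 : ℕ) / n := by ring
      _ < _ := by gcongr
  · calc φ + 2 * π * (k - 1 : ℕ) / n < 2 * π / n + 2 * π * (k - 1 : ℕ) / n := by gcongr
      _ = 2 * ((k - 1 : ℕ) + 1) * π / n := by ring

theorem halfplane_arc2 (n : ℕ) (hn : 2 ≤ n) (ν : ℕ) (hν : ν = n / 2)
    (ρ : ℂ) (hρ : ρ = Complex.exp (2 * Real.pi * Complex.I / n))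
    (φ : ℝ) (hφ : Real.pi / n < φ) (hφ' : φ < 2 * Real.pi / n)
    (w : ℂ) (hw : w = Complex.exp (Complex.I * φ))
    (k : ℕ) (hk1 : 1 ≤ k) (hkn : k ≤ n) :
    (Complex.I * w * ρ ^ (k - 1)).re < 0 ↔ k ≤ ν :=
  halfplane_arc2_general n ν hν ρ hρ φ hφ hφ' w hw k hk1 hkn
end

section
/- Let q ∈ L¹([a,b]) (complex valued), let Γ be a subset of the unit circle in ℂ, and let k₁, k₂ ∈ ℂ with k₁ ≠ 0 be such that Re(i·w·(k₁x + k₂)) ≤ 0 for all x ∈ [a,b] and all w ∈ Γ. Then sup_{w∈Γ} |∫_a^b q(x)·e^{iRw(k₁x + k₂)} dx| → 0 as R → +∞. -/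
/-!
Approximate `q` in `L¹(a, b)` by a smooth `g`. Since `‖exp (I R w (k₁ x + k₂))‖ ≤ 1` on `[a, b]`
for `R ≥ 0` and `w ∈ Γ`, replacing `q` by `g` costs at most `‖q - g‖₁`, uniformly in `R` and `w`.
For `g` itself, integrating by parts against the primitive `exp (c x + d) / c` with
`c = I R w k₁` gives a bound `K / (R ‖k₁‖)` with `K` depending only on `g`.
-/

open Complex Filter MeasureTheory Set Topology
open scoped ContDiff

theorem MeasureTheory.Integrable.exists_contDiff_integral_sub_le {E F : Type*}
    [NormedAddCommGroup E] [NormedSpace ℝ E] [FiniteDimensional ℝ E] [MeasurableSpace E]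
    [BorelSpace E] [NormedAddCommGroup F] [NormedSpace ℝ F]
    {μ : Measure E} [IsFiniteMeasureOnCompacts μ] {f : E → F} (hf : Integrable f μ)
    {ε : ℝ} (hε : 0 < ε) :
    ∃ g : E → F, HasCompactSupport g ∧ ContDiff ℝ ∞ g ∧ ∫ x, ‖f x - g x‖ ∂μ ≤ ε := by
  obtain ⟨g, hg_supp, hg, hle⟩ :=
    (memLp_one_iff_integrable.2 hf).exist_eLpNorm_sub_le ENNReal.one_ne_top le_rfl hε
  have hfg : Integrable (f - g) μ := hf.sub (hg.continuous.integrable_of_hasCompactSupport hg_supp)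
  rw [eLpNorm_one_eq_lintegral_enorm, ← ofReal_integral_norm_eq_lintegral_enorm hfg,
    ENNReal.ofReal_le_ofReal_iff hε.le] at hle
  exact ⟨g, hg_supp, hg, hle⟩

theorem norm_cexp_ofReal_mul_le_one {z : ℂ} (hz : z.re ≤ 0) {R : ℝ} (hR : 0 ≤ R) :
    ‖exp (R * z)‖ ≤ 1 := by
  rw [norm_exp, re_ofReal_mul, Real.exp_le_one_iff]
  exact mul_nonpos_of_nonneg_of_nonpos hR hz

theorem norm_intervalIntegral_mul_le_of_norm_le_one {a b : ℝ} (hab : a ≤ b) {f e : ℝ → ℂ}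
    (hf : IntegrableOn f (Icc a b)) (he_le : ∀ x ∈ Icc a b, ‖e x‖ ≤ 1) :
    ‖∫ x in a..b, f x * e x‖ ≤ ∫ x in Icc a b, ‖f x‖ := by
  rw [integral_Icc_eq_integral_Ioc, ← intervalIntegral.integral_of_le hab]
  refine intervalIntegral.norm_integral_le_of_norm_le hab (ae_of_all _ fun x hx => ?_)
    ((intervalIntegrable_iff_integrableOn_Icc_of_le hab).2 hf.norm)
  rw [norm_mul]
  exact mul_le_of_le_one_right (norm_nonneg _) (he_le x (Ioc_subset_Icc_self hx))

theorem norm_intervalIntegral_mul_sub_le {a b : ℝ} (hab : a ≤ b) {f g e : ℝ → ℂ}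
    (hf : IntegrableOn f (Icc a b)) (hg : IntegrableOn g (Icc a b))
    (he : ContinuousOn e (Icc a b)) (he_le : ∀ x ∈ Icc a b, ‖e x‖ ≤ 1) :
    ‖(∫ x in a..b, f x * e x) - ∫ x in a..b, g x * e x‖ ≤ ∫ x in Icc a b, ‖f x - g x‖ := by
  have hf' := (intervalIntegrable_iff_integrableOn_Icc_of_le hab).2 hf
  have hg' := (intervalIntegrable_iff_integrableOn_Icc_of_le hab).2 hg
  rw [← uIcc_of_le hab] at he
  rw [← intervalIntegral.integral_sub (hf'.mul_continuousOn he) (hg'.mul_continuousOn he)]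
  simp_rw [← sub_mul]
  exact norm_intervalIntegral_mul_le_of_norm_le_one hab (hf.sub hg) he_le

theorem norm_intervalIntegral_mul_cexp_le {a b : ℝ} (hab : a ≤ b) {h : ℝ → ℂ} (hh : ContDiff ℝ 1 h)
    {c : ℂ} (hc : c ≠ 0) (d : ℂ) (hexp : ∀ x ∈ Icc a b, ‖exp (c * x + d)‖ ≤ 1) :
    ‖∫ x in a..b, h x * exp (c * x + d)‖
      ≤ (‖h a‖ + ‖h b‖ + ∫ x in a..b, ‖deriv h x‖) / ‖c‖ := by
  set v : ℝ → ℂ := fun x => exp (c * x + d) / c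
  have hv : ∀ x : ℝ, HasDerivAt v (exp (c * x + d)) x := fun x => by
    have := (((hasDerivAt_id (x : ℂ)).const_mul c).add_const d).cexp.comp_ofReal.div_const c
    simpa [mul_div_cancel_right₀ _ hc] using this
  have hv_le : ∀ x ∈ Icc a b, ‖v x‖ ≤ ‖c‖⁻¹ := fun x hx => by
    rw [norm_div, div_eq_mul_inv]
    exact mul_le_of_le_one_left (by positivity) (hexp x hx)
  have hh' : Continuous (deriv h) := hh.continuous_deriv le_rfl
  have he : Continuous fun x : ℝ => exp (c * x + d) := by fun_prop
  rw [intervalIntegral.integral_mul_deriv_eq_deriv_mul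
    (fun x _ => (hh.differentiable one_ne_zero x).hasDerivAt) (fun x _ => hv x)
    (hh'.intervalIntegrable a b) (he.intervalIntegrable a b)]
  have hint : ‖∫ x in a..b, deriv h x * v x‖ ≤ (∫ x in a..b, ‖deriv h x‖) / ‖c‖ := by
    rw [← intervalIntegral.integral_div]
    refine intervalIntegral.norm_integral_le_of_norm_le hab (ae_of_all _ fun x hx => ?_)
      ((hh'.norm.div_const _).intervalIntegrable a b)
    rw [norm_mul, div_eq_mul_inv]
    exact mul_le_mul_of_nonneg_left (hv_le x (Ioc_subset_Icc_self hx)) (norm_nonneg _)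
  have hb := hv_le b (right_mem_Icc.2 hab)
  have ha := hv_le a (left_mem_Icc.2 hab)
  calc ‖h b * v b - h a * v a - ∫ x in a..b, deriv h x * v x‖
      ≤ ‖h b‖ * ‖v b‖ + ‖h a‖ * ‖v a‖ + ‖∫ x in a..b, deriv h x * v x‖ := by
        grw [norm_sub_le, norm_sub_le, norm_mul, norm_mul]
    _ ≤ ‖h b‖ * ‖c‖⁻¹ + ‖h a‖ * ‖c‖⁻¹ + (∫ x in a..b, ‖deriv h x‖) / ‖c‖ := by gcongr
    _ = (‖h a‖ + ‖h b‖ + ∫ x in a..b, ‖deriv h x‖) / ‖c‖ := by ring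

theorem uniform_riemann_lebesgue (a b : ℝ) (hab : a < b)
    (q : ℝ → ℂ) (hq : MeasureTheory.IntegrableOn q (Set.Icc a b))
    (Γ : Set ℂ) (hΓ : ∀ w ∈ Γ, ‖w‖ = 1)
    (k₁ k₂ : ℂ) (hk₁ : k₁ ≠ 0)
    (hre : ∀ x ∈ Set.Icc a b, ∀ w ∈ Γ, (Complex.I * w * (k₁ * x + k₂)).re ≤ 0) :
    ∀ ε > 0, ∃ R₀ : ℝ, ∀ R ≥ R₀, ∀ w ∈ Γ,
      ‖∫ x in a..b, q x * Complex.exp (Complex.I * R * w * (k₁ * x + k₂))‖ < ε := by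
  intro ε hε
  obtain ⟨g, -, hg, hqg⟩ := Integrable.exists_contDiff_integral_sub_le hq (half_pos hε)
  set K := ‖g a‖ + ‖g b‖ + ∫ x in a..b, ‖deriv g x‖
  have hdecay : Tendsto (fun R : ℝ => K / (R * ‖k₁‖)) atTop (𝓝 0) :=
    tendsto_const_nhds.div_atTop (tendsto_id.atTop_mul_const (norm_pos_iff.2 hk₁))
  obtain ⟨R₀, hR₀⟩ := ((hdecay.eventually (gt_mem_nhds (half_pos hε))).and
    (eventually_gt_atTop 0)).exists_forall_of_atTop
  refine ⟨R₀, fun R hR w hw => ?_⟩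
  obtain ⟨hK, hR⟩ := hR₀ R hR
  have hphase (x : ℝ) : I * R * w * (k₁ * x + k₂) = I * R * w * k₁ * x + I * R * w * k₂ := by ring
  have hexp : ∀ x ∈ Icc a b, ‖exp (I * R * w * k₁ * x + I * R * w * k₂)‖ ≤ 1 := fun x hx => by
    rw [← hphase, show I * R * w * (k₁ * x + k₂) = R * (I * w * (k₁ * x + k₂)) by ring]
    exact norm_cexp_ofReal_mul_le_one (hre x hx w hw) hR.le
  have hc : ‖I * R * w * k₁‖ = R * ‖k₁‖ := by simp [hΓ w hw, abs_of_pos hR]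
  have hqg' := norm_intervalIntegral_mul_sub_le hab.le hq hg.continuous.integrableOn_Icc
    (by fun_prop) hexp
  have hgK := norm_intervalIntegral_mul_cexp_le hab.le (hg.of_le (by simp))
    (norm_pos_iff.1 (hc ▸ by positivity)) _ hexp
  rw [hc] at hgK
  simp only [hphase]
  calc _ ≤ ‖∫ x in a..b, g x * exp (I * R * w * k₁ * x + I * R * w * k₂)‖ + _ :=
        norm_le_norm_add_norm_sub' _ _
    _ ≤ K / (R * ‖k₁‖) + ε / 2 := add_le_add hgK (hqg'.trans hqg)
    _ < ε := by linarith
end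

section
/- Let n ≥ 2, ρ = e^{2πi/n}, 1 ≤ ν ≤ n−1, θ ∈ ℂ \ {0}. Let Ŵ be the matrix with Ŵ_{j+1,k+1} = ρ^{kj} for k < ν and θ·ρ^{kj} for k ≥ ν, let A be the matrix with A_{j+1,k+1} = ρ^{kj}, and let P be the matrix with P_{αβ} = 1/(ρ^{β−α}−1) for α > ν ≥ β and 0 otherwise. Then tr(P·Ŵ^{-1}·A) = 0. -/
open Complex Matrix

theorem quasi_periodic_trace_zero (n : ℕ) (hn : 2 ≤ n) (ν : ℕ) (hν1 : 1 ≤ ν) (hν2 : ν ≤ n - 1)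
    (θ : ℂ) (hθ : θ ≠ 0)
    (ρ : ℂ) (hρ : ρ = Complex.exp (2 * Real.pi * Complex.I / n))
    (W A P : Matrix (Fin n) (Fin n) ℂ)
    (hW : ∀ j k : Fin n, W j k =
      if (k : ℕ) < ν then ρ ^ ((k : ℕ) * (j : ℕ)) else θ * ρ ^ ((k : ℕ) * (j : ℕ)))
    (hA : ∀ j k : Fin n, A j k = ρ ^ ((k : ℕ) * (j : ℕ)))
    (hP : ∀ α β : Fin n, P α β =
      if ν ≤ (α : ℕ) ∧ (β : ℕ) < ν then 1 / (ρ ^ ((β : ℤ) - (α : ℤ)) - 1) else 0) :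
    Matrix.trace (P * W⁻¹ * A) = 0 := by
  have hprim : IsPrimitiveRoot ρ n := hρ ▸ Complex.isPrimitiveRoot_exp n (by omega)
  set d : Fin n → ℂ := fun k => if (k : ℕ) < ν then (1 : ℂ) else θ with hd
  have hWAD : W = A * Matrix.diagonal d := by
    ext j k
    rw [Matrix.mul_diagonal, hW j k, hA j k, hd]
    by_cases h : (k : ℕ) < ν <;> simp [h] <;> ring
  have hAvdm : A = Matrix.vandermonde (fun j : Fin n => ρ ^ (j : ℕ)) := by
    ext j k
    rw [hA j k, Matrix.vandermonde_apply, ← pow_mul, Nat.mul_comm]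
  have hAdet : IsUnit A.det := by
    rw [hAvdm, Matrix.det_vandermonde, isUnit_iff_ne_zero]
    refine Finset.prod_ne_zero_iff.2 fun i _ => Finset.prod_ne_zero_iff.2 fun j hj => ?_
    have hij : i < j := Finset.mem_Ioi.1 hj
    refine sub_ne_zero.2 fun h => ?_
    exact absurd (Fin.ext (hprim.pow_inj j.isLt i.isLt h)) (by omega)
  have key : P * W⁻¹ * A = P * (Matrix.diagonal d)⁻¹ := by
    rw [hWAD, Matrix.mul_inv_rev, mul_assoc, mul_assoc, Matrix.nonsing_inv_mul A hAdet,
      mul_one]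
  rw [key, Matrix.inv_diagonal, Matrix.trace]
  apply Finset.sum_eq_zero
  intro i _
  have : P i i = 0 := by rw [hP i i]; simp
  simp [Matrix.diag, Matrix.mul_diagonal, this]
end

section
/- Let m ≥ 1, n = 2m, ρ = e^{2πi/n}, ν = m. Let d_0,…,d_{2m−1} be distinct integers in {0,…,2m−1}, and let a_j, b_j ∈ ℂ satisfy b_j = 0 and a_j ≠ 0 for j < m, and a_j = 0 and b_j ≠ 0 for j ≥ m (almost separated conditions). Let Ŵ be the n×n matrix with rows (a_j, ρ^{d_j}a_j, …, ρ^{(m−1)d_j}a_j, ρ^{m d_j}b_j, …, ρ^{(2m−1)d_j}b_j), assumed invertible, let A_{j+1,k+1} = a_j ρ^{k d_j}, and let P be given by P_{αβ} = 1/(ρ^{β−α}−1) for α > m ≥ β and 0 otherwise. Then tr(P·Ŵ^{-1}·A) = Σ_{j=0}^{m−1} d_j − m(2m−1)/2. -/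
/-!
Expanding `1 / (ζ ^ t - 1) = n⁻¹ ∑_{s<n} s ζ^{ts}` (for `ζ ^ n = 1 ≠ ζ ^ t`) writes `P` as
`n⁻¹ ∑_s s • u_s v_sᵀ` with the truncated characters `v_s = (ζ^{sy})_{y<m}` and
`u_s = (ζ^{-sx})_{x≥m}`, so `tr (P W⁻¹ A) = n⁻¹ ∑_s s · v_s ⬝ W⁻¹ A u_s`.
Split `u_s = e_s - ℓ_s`, where `e_s = (ζ^{-sx})_x` is the full character and `ℓ_s` its part on
`x < m`. The first `m` columns of `W` and `A` agree, so `W⁻¹ A ℓ_s = ℓ_s`, and `v_s ⬝ ℓ_s = m`.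
By orthogonality `A e_s` is supported on the rows `j` with `d_j = s`; for such `j < m` the row
`W_j` is `a_j v_s` (as `b_j = 0`), so `a_j v_s W⁻¹` is the `j`-th unit vector, while `a_j = 0`
for `j ≥ m`. Hence `v_s ⬝ W⁻¹ A u_s = n · #{j < m | d_j = s} - m`, and summing against `s` gives
`∑_{j<m} d_j - m (n - 1) / 2`.
-/

section RootsOfUnity

open Finset

variable {K : Type*} [Field K]

theorem sum_range_natCast_mul_pow_of_pow_eq_one {z : K} {n : ℕ} (hzn : z ^ n = 1)
    (hz1 : z ≠ 1) : ∑ s ∈ range n, (s : K) * z ^ s = n / (z - 1) := by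
  have key (N : ℕ) : (z - 1) * ∑ s ∈ range N, (s : K) * z ^ s
      = N * z ^ N - z * ∑ s ∈ range N, z ^ s := by
    induction N with
    | zero => simp
    | succ N ih =>
      rw [sum_range_succ, sum_range_succ]
      push_cast
      linear_combination ih
  have hgeom : ∑ s ∈ range n, z ^ s = 0 := by rw [geom_sum_eq hz1, hzn, sub_self, zero_div]
  rw [eq_div_iff (sub_ne_zero.2 hz1), mul_comm, key, hgeom, hzn]
  ring

variable {ζ : K} {n : ℕ}

theorem IsPrimitiveRoot.one_div_zpow_sub_one_eq_sum [NeZero n] (hζ : IsPrimitiveRoot ζ n) {t : ℤ}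
    (ht : ¬ (n : ℤ) ∣ t) : 1 / (ζ ^ t - 1) = (n : K)⁻¹ * ∑ s ∈ range n, (s : K) * (ζ ^ t) ^ s := by
  have := hζ.neZero'
  have hpow : (ζ ^ t) ^ n = 1 := by
    rw [← zpow_natCast, ← zpow_mul, mul_comm, zpow_mul, zpow_natCast, hζ.pow_eq_one, one_zpow]
  have hne : ζ ^ t ≠ 1 := mt (hζ.zpow_eq_one_iff_dvd t).1 ht
  rw [sum_range_natCast_mul_pow_of_pow_eq_one hpow hne, div_eq_mul_inv (n : K),
    inv_mul_cancel_left₀ this.out, one_div]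

def wave (ζ : K) (s : ℕ) : Fin n → K := fun x => ζ ^ (s * (x : ℕ))

theorem IsPrimitiveRoot.wave_dotProduct_wave_inv (hζ : IsPrimitiveRoot ζ n) {i j : ℕ}
    (hi : i < n) (hj : j < n) :
    wave ζ i ⬝ᵥ wave (n := n) ζ⁻¹ j = if i = j then (n : K) else 0 := by
  have hζ0 : ζ ≠ 0 := hζ.ne_zero (by omega)
  set z := ζ ^ i * ζ⁻¹ ^ j
  have hterm (x : Fin n) : wave ζ i x * wave ζ⁻¹ j x = z ^ (x : ℕ) := by
    simp only [wave, z, mul_pow, ← pow_mul]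
  simp only [dotProduct, hterm, Fin.sum_univ_eq_sum_range (z ^ ·)]
  split_ifs with hij
  · simp [z, hij, hζ0]
  · have hzn : z ^ n = 1 := by
      rw [mul_pow, ← pow_mul, ← pow_mul, mul_comm i, mul_comm j, pow_mul, pow_mul, hζ.pow_eq_one,
        inv_pow, hζ.pow_eq_one]
      simp
    have hz1 : z ≠ 1 := fun h => hij <| hζ.pow_inj hi hj <| by
      rw [← mul_inv_eq_one₀ (pow_ne_zero j hζ0), ← inv_pow]; exact h
    rw [geom_sum_eq hz1, hzn, sub_self, zero_div]

end RootsOfUnity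

section Waves

open Finset Matrix

variable {K : Type*} [Field K] {n m : ℕ}

def headWave (m : ℕ) (ζ : K) (s : ℕ) : Fin n → K := fun x => if (x : ℕ) < m then wave ζ s x else 0

def tailWave (m : ℕ) (ζ : K) (s : ℕ) : Fin n → K := fun x => if (x : ℕ) < m then 0 else wave ζ s x

theorem headWave_add_tailWave (ζ : K) (s : ℕ) :
    headWave (n := n) m ζ s + tailWave m ζ s = wave ζ s := by
  ext x
  simp only [Pi.add_apply, headWave, tailWave]
  split_ifs <;> simp

theorem headWave_dotProduct_headWave_inv {ζ : K} (hζ : ζ ≠ 0) (hmn : m ≤ n) (s : ℕ) :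
    headWave (n := n) m ζ s ⬝ᵥ headWave m ζ⁻¹ s = m := by
  have hterm (x : Fin n) :
      headWave m ζ s x * headWave m ζ⁻¹ s x = if (x : ℕ) < m then 1 else 0 := by
    simp only [headWave, wave]
    split_ifs <;> simp [hζ]
  simp only [dotProduct, hterm, sum_boole, Fin.card_filter_val_lt, min_eq_right hmn]

theorem IsPrimitiveRoot.eq_smul_sum_vecMulVec {ζ : K} [NeZero n] (hζ : IsPrimitiveRoot ζ n)
    {P : Matrix (Fin n) (Fin n) K}
    (hP : ∀ α β : Fin n, P α β =
      if m ≤ (α : ℕ) ∧ (β : ℕ) < m then 1 / (ζ ^ ((β : ℤ) - (α : ℤ)) - 1) else 0) :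
    P = (n : K)⁻¹ • ∑ s ∈ range n, (s : K) • vecMulVec (tailWave m ζ⁻¹ s) (headWave m ζ s) := by
  ext α β
  simp only [hP, Matrix.smul_apply, Matrix.sum_apply, vecMulVec_apply, headWave, tailWave, wave,
    smul_eq_mul]
  by_cases hα : (α : ℕ) < m
  · simp [hα, show ¬ m ≤ (α : ℕ) by omega]
  by_cases hβ : (β : ℕ) < m
  · have hndvd : ¬ (n : ℤ) ∣ (β : ℤ) - (α : ℤ) := fun hdvd => by
      have := Int.eq_zero_of_abs_lt_dvd hdvd (by rw [abs_lt]; omega)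
      omega
    rw [if_pos ⟨by omega, hβ⟩, hζ.one_div_zpow_sub_one_eq_sum hndvd]
    congr 1
    refine sum_congr rfl fun s _ => ?_
    rw [if_neg hα, if_pos hβ, zpow_sub₀ (hζ.ne_zero (NeZero.ne n)), div_eq_mul_inv,
      mul_pow, zpow_natCast, zpow_natCast, inv_pow, inv_pow, ← pow_mul, ← pow_mul,
      mul_comm (β : ℕ), mul_comm (α : ℕ)]
    ring
  · simp [hβ]

end Waves

section Trace

open Finset Matrix

theorem nonsing_inv_mul_mulVec_eq_sub {ι R : Type*} [Fintype ι] [DecidableEq ι] [CommRing R]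
    {W A : Matrix ι ι R} (hW : IsUnit W.det) {l u : ι → R} (hl : W *ᵥ l = A *ᵥ l) :
    (W⁻¹ * A) *ᵥ u = W⁻¹ *ᵥ (A *ᵥ (l + u)) - l := by
  rw [mulVec_add, mulVec_add, ← hl, mulVec_mulVec, mulVec_mulVec, nonsing_inv_mul W hW,
    one_mulVec]
  abel

variable {K : Type*} [Field K] {n m : ℕ} {ζ : K} {W A : Matrix (Fin n) (Fin n) K}
  {a : Fin n → K} {d : Fin n → ℕ}

theorem headWave_dotProduct_nonsing_inv_mulVec_mulVec_wave_inv (hζ : IsPrimitiveRoot ζ n)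
    (hW : IsUnit W.det) (hd : ∀ j, d j < n) (hA : ∀ j k : Fin n, A j k = a j * ζ ^ ((k : ℕ) * d j))
    (hrow : ∀ j : Fin n, (j : ℕ) < m → W j = a j • headWave m ζ (d j))
    (ha : ∀ j : Fin n, m ≤ (j : ℕ) → a j = 0) {s : ℕ} (hs : s < n) :
    headWave m ζ s ⬝ᵥ W⁻¹ *ᵥ (A *ᵥ wave ζ⁻¹ s)
      = ∑ j ∈ univ.filter (fun j : Fin n => (j : ℕ) < m), if d j = s then (n : K) else 0 := by
  have hAwave : A *ᵥ wave ζ⁻¹ s = fun j => a j * if d j = s then (n : K) else 0 := by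
    ext j
    rw [← hζ.wave_dotProduct_wave_inv (hd j) hs, mulVec, dotProduct, dotProduct, mul_sum]
    refine sum_congr rfl fun k _ => ?_
    rw [hA, wave, wave, mul_comm (k : ℕ), mul_assoc]
  have hcoef (j : Fin n) : (headWave m ζ s ᵥ* W⁻¹) j * (a j * if d j = s then (n : K) else 0)
      = if (j : ℕ) < m then (if d j = s then (n : K) else 0) else 0 := by
    by_cases hj : (j : ℕ) < m
    · by_cases hdj : d j = s
      · subst hdj
        have hdiag : a j * (headWave m ζ (d j) ᵥ* W⁻¹) j = 1 := by
          rw [← smul_eq_mul, ← Pi.smul_apply, ← smul_vecMul, ← hrow j hj, ← mul_apply_eq_vecMul,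
            mul_nonsing_inv W hW, one_apply_eq]
        simp only [hj, if_true, ← mul_assoc, mul_comm _ (a j), hdiag, one_mul]
      · simp [hdj]
    · simp [hj, ha j (by omega)]
  rw [dotProduct_mulVec, hAwave, sum_filter]
  exact sum_congr rfl fun j _ => hcoef j

theorem headWave_dotProduct_nonsing_inv_mul_mulVec_tailWave (hζ : IsPrimitiveRoot ζ n)
    (hmn : m ≤ n) (hW : IsUnit W.det) (hd : ∀ j, d j < n)
    (hA : ∀ j k : Fin n, A j k = a j * ζ ^ ((k : ℕ) * d j))
    (hWA : ∀ j k : Fin n, (k : ℕ) < m → W j k = A j k)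
    (hrow : ∀ j : Fin n, (j : ℕ) < m → W j = a j • headWave m ζ (d j))
    (ha : ∀ j : Fin n, m ≤ (j : ℕ) → a j = 0) {s : ℕ} (hs : s < n) :
    headWave m ζ s ⬝ᵥ (W⁻¹ * A) *ᵥ tailWave m ζ⁻¹ s
      = (∑ j ∈ univ.filter (fun j : Fin n => (j : ℕ) < m), if d j = s then (n : K) else 0) - m := by
  have hcols : W *ᵥ headWave m ζ⁻¹ s = A *ᵥ headWave m ζ⁻¹ s := by
    ext j
    simp only [mulVec, dotProduct]
    refine sum_congr rfl fun k _ => ?_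
    by_cases hk : (k : ℕ) < m
    · rw [hWA j k hk]
    · simp [headWave, hk]
  rw [nonsing_inv_mul_mulVec_eq_sub hW hcols, headWave_add_tailWave, dotProduct_sub,
    headWave_dotProduct_nonsing_inv_mulVec_mulVec_wave_inv hζ hW hd hA hrow ha hs,
    headWave_dotProduct_headWave_inv (hζ.ne_zero (by omega)) hmn]

theorem IsPrimitiveRoot.trace_mul_nonsing_inv_mul [CharZero K] [NeZero n]
    (hζ : IsPrimitiveRoot ζ n) (hmn : m ≤ n) {P : Matrix (Fin n) (Fin n) K} (hW : IsUnit W.det)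
    (hd : ∀ j, d j < n) (hA : ∀ j k : Fin n, A j k = a j * ζ ^ ((k : ℕ) * d j))
    (hWA : ∀ j k : Fin n, (k : ℕ) < m → W j k = A j k)
    (hrow : ∀ j : Fin n, (j : ℕ) < m → W j = a j • headWave m ζ (d j))
    (ha : ∀ j : Fin n, m ≤ (j : ℕ) → a j = 0)
    (hP : ∀ α β : Fin n, P α β =
      if m ≤ (α : ℕ) ∧ (β : ℕ) < m then 1 / (ζ ^ ((β : ℤ) - (α : ℤ)) - 1) else 0) :
    trace (P * W⁻¹ * A)
      = ∑ j ∈ univ.filter (fun j : Fin n => (j : ℕ) < m), (d j : K) - m * (n - 1) / 2 := by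
  set J := univ.filter (fun j : Fin n => (j : ℕ) < m)
  have hfreq (s : ℕ) (hs : s ∈ range n) :
      trace (vecMulVec (tailWave m ζ⁻¹ s) (headWave m ζ s) * (W⁻¹ * A))
        = (∑ j ∈ J, if d j = s then (n : K) else 0) - m := by
    rw [vecMulVec_mul, trace_vecMulVec, dotProduct_comm, ← dotProduct_mulVec,
      headWave_dotProduct_nonsing_inv_mul_mulVec_tailWave hζ hmn hW hd hA hWA hrow ha
        (mem_range.1 hs)]
  have hfiber : ∑ s ∈ range n, (s : K) * ∑ j ∈ J, (if d j = s then (n : K) else 0)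
      = n * ∑ j ∈ J, (d j : K) := by
    simp_rw [mul_sum, mul_ite, mul_zero]
    rw [sum_comm]
    exact sum_congr rfl fun j _ => by rw [sum_ite_eq, if_pos (mem_range.2 (hd j)), mul_comm]
  have hgauss : ∑ s ∈ range n, (s : K) = n * (n - 1) / 2 := by
    have h := congrArg (Nat.cast (R := K)) (sum_range_id_mul_two n)
    push_cast [Nat.cast_sub (NeZero.one_le : 1 ≤ n)] at h
    linear_combination h / 2
  rw [Matrix.mul_assoc, hζ.eq_smul_sum_vecMulVec hP, smul_mul, sum_mul, trace_smul, trace_sum]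
  simp_rw [smul_mul, trace_smul, smul_eq_mul]
  rw [sum_congr rfl fun s hs => by rw [hfreq s hs]]
  simp_rw [mul_sub, sum_sub_distrib, hfiber, ← sum_mul, hgauss]
  field_simp [Nat.cast_ne_zero.2 (NeZero.ne n)]

end Trace

open Complex Matrix Finset

theorem separated_even_trace_general (m : ℕ) (hm : 1 ≤ m)
    (ρ : ℂ) (hρ : ρ = Complex.exp (2 * Real.pi * Complex.I / (2 * m)))
    (d : Fin (2 * m) → ℕ) (hdlt : ∀ j, d j < 2 * m)
    (a b : Fin (2 * m) → ℂ)
    (hab : ∀ j : Fin (2 * m),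
      ((j : ℕ) < m → b j = 0 ∧ a j ≠ 0) ∧ (m ≤ (j : ℕ) → a j = 0 ∧ b j ≠ 0))
    (W A P : Matrix (Fin (2 * m)) (Fin (2 * m)) ℂ)
    (hW : ∀ j k : Fin (2 * m), W j k =
      if (k : ℕ) < m then a j * ρ ^ ((k : ℕ) * d j) else b j * ρ ^ ((k : ℕ) * d j))
    (hWinv : IsUnit W.det)
    (hA : ∀ j k : Fin (2 * m), A j k = a j * ρ ^ ((k : ℕ) * d j))
    (hP : ∀ α β : Fin (2 * m), P α β =
      if m ≤ (α : ℕ) ∧ (β : ℕ) < m then 1 / (ρ ^ ((β : ℤ) - (α : ℤ)) - 1) else 0) :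
    Matrix.trace (P * W⁻¹ * A)
      = (∑ j ∈ Finset.univ.filter (fun j : Fin (2 * m) => (j : ℕ) < m), (d j : ℂ))
          - m * (2 * m - 1) / 2 := by
  have : NeZero (2 * m) := ⟨by omega⟩
  have hprim : IsPrimitiveRoot ρ (2 * m) := by
    rw [hρ]
    convert Complex.isPrimitiveRoot_exp (2 * m) (by omega) using 3
    push_cast
    ring
  have hWA (j k : Fin (2 * m)) (hk : (k : ℕ) < m) : W j k = A j k := by rw [hW, hA, if_pos hk]
  have hrow (j : Fin (2 * m)) (hj : (j : ℕ) < m) : W j = a j • headWave m ρ (d j) := by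
    ext k
    rw [hW, Pi.smul_apply, smul_eq_mul, headWave, wave, mul_comm (d j)]
    split_ifs
    · rfl
    · rw [((hab j).1 hj).1, zero_mul, mul_zero]
  rw [hprim.trace_mul_nonsing_inv_mul (by omega) hWinv hdlt hA hWA hrow
    (fun j hj => ((hab j).2 hj).1) hP]
  push_cast
  ring

theorem separated_even_trace (m : ℕ) (hm : 1 ≤ m)
    (ρ : ℂ) (hρ : ρ = Complex.exp (2 * Real.pi * Complex.I / (2 * m)))
    (d : Fin (2 * m) → ℕ) (hd : Function.Injective d) (hdlt : ∀ j, d j < 2 * m)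
    (a b : Fin (2 * m) → ℂ)
    (hab : ∀ j : Fin (2 * m),
      ((j : ℕ) < m → b j = 0 ∧ a j ≠ 0) ∧ (m ≤ (j : ℕ) → a j = 0 ∧ b j ≠ 0))
    (W A P : Matrix (Fin (2 * m)) (Fin (2 * m)) ℂ)
    (hW : ∀ j k : Fin (2 * m), W j k =
      if (k : ℕ) < m then a j * ρ ^ ((k : ℕ) * d j) else b j * ρ ^ ((k : ℕ) * d j))
    (hWinv : IsUnit W.det)
    (hA : ∀ j k : Fin (2 * m), A j k = a j * ρ ^ ((k : ℕ) * d j))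
    (hP : ∀ α β : Fin (2 * m), P α β =
      if m ≤ (α : ℕ) ∧ (β : ℕ) < m then 1 / (ρ ^ ((β : ℤ) - (α : ℤ)) - 1) else 0) :
    Matrix.trace (P * W⁻¹ * A)
      = (∑ j ∈ Finset.univ.filter (fun j : Fin (2 * m) => (j : ℕ) < m), (d j : ℂ))
          - m * (2 * m - 1) / 2 :=
  separated_even_trace_general m hm ρ hρ d hdlt a b hab W A P hW hWinv hA hP
end
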